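/- For integers g ≥ 0 and n ≥ 2 with g ≥ (n-1)(n-2)/2, there exists a connected graph G with first Betti number β(G) = g and chromatic number χ(G) = n. -/

import Mathlib

/-!
Start from `K_n`, which is connected with `χ = n` and `β = C(n,2) - n + 1 = (n-1)(n-2)/2`.
Gluing a 4-cycle `a – x – y – b` along an edge `ab` adds two vertices and three edges, so it
raises `β` by one and keeps the graph connected; it does not change `χ`, because any colouring
extends by giving `x` the colour of `b` and `y` the colour of `a`. Glue `g - (n-1)(n-2)/2` squares.
-/

namespace SimpleGraph

variable {V : Type*}

noncomputable def cyclomaticNumber (G : SimpleGraph V) : ℤ :=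
  Nat.card G.edgeSet - Nat.card V + 1

def addSquare (H : SimpleGraph V) (a b : V) : SimpleGraph (V ⊕ Bool) :=
  H.map Function.Embedding.inl ⊔ edge (.inl a) (.inr false) ⊔ edge (.inr false) (.inr true) ⊔
    edge (.inr true) (.inl b)

variable {H : SimpleGraph V} {a b : V}

def addSquareInl : H →g H.addSquare a b :=
  (Hom.ofLE (le_sup_left.trans (le_sup_left.trans le_sup_left))).comp
    (Embedding.map .inl H).toHom

lemma addSquare_adj_inl_inr_false : (H.addSquare a b).Adj (.inl a) (.inr false) := by
  simp [addSquare, edge_adj]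

lemma addSquare_adj_inr : (H.addSquare a b).Adj (.inr false) (.inr true) := by
  simp [addSquare, edge_adj]

lemma Connected.addSquare (hH : H.Connected) : (H.addSquare a b).Connected := by
  have reach : ∀ w, (H.addSquare a b).Reachable (.inl a) w := by
    rintro (v | _ | _)
    · exact (hH.preconnected a v).map addSquareInl
    · exact addSquare_adj_inl_inr_false.reachable
    · exact addSquare_adj_inl_inr_false.reachable.trans addSquare_adj_inr.reachable
  exact { preconnected := fun v w => (reach v).symm.trans (reach w), nonempty := ⟨.inl a⟩ }

lemma natCard_edgeSet_addSquare [Finite V] :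
    Nat.card (H.addSquare a b).edgeSet = Nat.card H.edgeSet + 3 := by
  classical
  have := Fintype.ofFinite V
  simp only [Nat.card_eq_fintype_card, ← edgeFinset_card, addSquare]
  rw [card_edgeFinset_sup_edge, card_edgeFinset_sup_edge, card_edgeFinset_sup_edge,
    card_edgeFinset_map] <;> simp [edge_adj]

lemma cyclomaticNumber_addSquare [Finite V] :
    (H.addSquare a b).cyclomaticNumber = H.cyclomaticNumber + 1 := by
  simp only [cyclomaticNumber, natCard_edgeSet_addSquare, Nat.card_sum,
    Nat.card_eq_fintype_card (α := Bool), Fintype.card_bool]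
  push_cast
  ring

def Coloring.addSquare {α : Type*} (C : H.Coloring α) (hab : H.Adj a b) :
    (H.addSquare a b).Coloring α :=
  Coloring.mk (Sum.elim C fun x => if x then C a else C b) <| by
    rintro (u | _ | _) (v | _ | _) huv <;>
      simp_all [SimpleGraph.addSquare, edge_adj, C.valid, C.valid hab.symm, Ne.symm]

lemma chromaticNumber_addSquare (hab : H.Adj a b) :
    (H.addSquare a b).chromaticNumber = H.chromaticNumber :=
  le_antisymm
    (chromaticNumber_le_of_forall_imp fun _ ⟨C⟩ => ⟨C.addSquare hab⟩)
    (chromaticNumber_mono_of_hom addSquareInl)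

theorem Connected.exists_cyclomaticNumber_eq_add {V : Type} [Finite V]
    {H : SimpleGraph V} (hH : H.Connected) {a b : V} (hab : H.Adj a b) (k : ℕ) :
    ∃ (W : Type) (_ : Finite W) (G : SimpleGraph W), G.Connected ∧
      G.cyclomaticNumber = H.cyclomaticNumber + k ∧ G.chromaticNumber = H.chromaticNumber := by
  induction k generalizing V with
  | zero => exact ⟨V, inferInstance, H, hH, by simp, rfl⟩
  | succ k ih =>
    obtain ⟨W, _, G, hG, hcyc, hχ⟩ :=
      ih hH.addSquare (addSquareInl.map_adj hab : (H.addSquare a b).Adj (.inl a) (.inl b))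
    refine ⟨W, inferInstance, G, hG, ?_, ?_⟩
    · rw [hcyc, cyclomaticNumber_addSquare]
      push_cast
      ring
    · rw [hχ, chromaticNumber_addSquare hab]

lemma cyclomaticNumber_top [Fintype V] :
    (⊤ : SimpleGraph V).cyclomaticNumber =
      ((Fintype.card V : ℤ) - 1) * (Fintype.card V - 2) / 2 := by
  classical
  rw [cyclomaticNumber, Nat.card_eq_fintype_card, ← edgeFinset_card,
    card_edgeFinset_top_eq_card_choose_two, Nat.card_eq_fintype_card]
  set n := Fintype.card V
  have choose_two_mul : ((n.choose 2 : ℕ) : ℤ) * 2 = n * (n - 1) := by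
    exact_mod_cast (show ((n.choose 2 : ℕ) : ℚ) * 2 = n * (n - 1) by
      rw [Nat.cast_choose_two]; ring)
  rw [show ((n : ℤ) - 1) * (n - 2) = 2 * (n.choose 2 - n + 1) by
      linear_combination -choose_two_mul,
    Int.mul_ediv_cancel_left _ two_ne_zero]

end SimpleGraph

/-- For `g ≥ 0` and `n ≥ 2` with `g ≥ (n-1)(n-2)/2`, there exists a connected graph with
first Betti number `g` and chromatic number `n`. -/
theorem exists_graph_betti_chromatic (g n : ℕ) (hn : 2 ≤ n)
    (hg : ((n : ℤ) - 1) * ((n : ℤ) - 2) / 2 ≤ g) :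
    ∃ (V : Type) (_ : Fintype V) (G : SimpleGraph V) (_ : Fintype G.edgeSet),
      G.Connected ∧ (G.edgeFinset.card : ℤ) - Fintype.card V + 1 = g ∧
      G.chromaticNumber = n := by
  have hab : (⊤ : SimpleGraph (Fin n)).Adj ⟨0, by omega⟩ ⟨1, by omega⟩ := by simp
  have : Nonempty (Fin n) := ⟨⟨0, by omega⟩⟩
  obtain ⟨W, _, G, hG, hcyc, hχ⟩ :=
    SimpleGraph.connected_top.exists_cyclomaticNumber_eq_add hab
      (g - ((n : ℤ) - 1) * ((n : ℤ) - 2) / 2).toNat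
  have := Fintype.ofFinite W
  have : Fintype G.edgeSet := Fintype.ofFinite _
  refine ⟨W, inferInstance, G, inferInstance, hG, ?_, by simpa using hχ⟩
  rw [SimpleGraph.cyclomaticNumber_top, Fintype.card_fin, Int.toNat_of_nonneg (by omega)] at hcyc
  rw [SimpleGraph.edgeFinset_card, ← Nat.card_eq_fintype_card, ← Nat.card_eq_fintype_card]
  exact hcyc.trans (by ring)
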